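/- arXiv:1610.09771 — 12 statements merged into one kernel-verified Lean document; each statement's English description precedes it below -/
import Mathlib

section
/- If A is a multiplicatively syndetic subset of the positive integers (i.e., there is a finite set F ⊆ ℕ such that every n ∈ ℕ satisfies nf ∈ A for some f ∈ F), then A has positive lower asymptotic density: liminf_{n→∞} |A ∩ {1,...,n}|/n > 0. -/
open Filter

private lemma count_lb (A : Set ℕ) (F : Finset ℕ) (hFpos : ∀ f ∈ F, 0 < f)
    (hF : ∀ n : ℕ, 0 < n → ∃ f ∈ F, n * f ∈ A) (M : ℕ) (hM : ∀ f ∈ F, f ≤ M)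
    (N : ℕ) : N ≤ F.card * (A ∩ Set.Icc 1 (N * M)).ncard := by
  classical
  -- choose witness
  have hg : ∀ m : ℕ, 0 < m → ∃ f, f ∈ F ∧ m * f ∈ A := by
    intro m hm; obtain ⟨f, hf, hfa⟩ := hF m hm; exact ⟨f, hf, hfa⟩
  choose g hgF hgA using hg
  set G : ℕ → ℕ := fun m => if h : 0 < m then m * g m h else 0 with hG
  set t : Finset ℕ := (Finset.Icc 1 (N * M)).filter (· ∈ A) with ht
  have hcoe : A ∩ Set.Icc 1 (N * M) = (t : Set ℕ) := by
    ext x; simp only [ht, Finset.coe_filter, Finset.mem_Icc, Set.mem_inter_iff,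
      Set.mem_Icc, Set.mem_setOf_eq]; tauto
  have hmaps : ∀ m ∈ Finset.Icc 1 N, G m ∈ t := by
    intro m hm
    rw [Finset.mem_Icc] at hm
    have hm0 : 0 < m := hm.1
    simp only [hG, dif_pos hm0]
    have hfF := hgF m hm0
    have hf1 := hFpos _ hfF
    refine Finset.mem_filter.mpr ⟨Finset.mem_Icc.mpr ⟨?_, ?_⟩, hgA m hm0⟩
    · exact le_trans hm0 (Nat.le_mul_of_pos_right m hf1)
    · exact Nat.mul_le_mul hm.2 (hM _ hfF)
  have hcard : (Finset.Icc 1 N).card ≤ F.card * t.card := by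
    refine Finset.card_le_mul_card_image_of_maps_to hmaps F.card ?_
    intro b _
    refine Finset.card_le_card_of_injOn (fun m => if h : 0 < m then g m h else 0) ?_ ?_
    · intro m hm
      simp only [Finset.mem_coe, Finset.mem_filter, Finset.mem_Icc] at hm
      have hm0 : 0 < m := hm.1.1
      simp only [dif_pos hm0]
      exact hgF m hm0
    · intro m hm m' hm' he
      simp only [Finset.coe_filter, Finset.mem_Icc, Set.mem_setOf_eq] at hm hm'
      have hm0 : 0 < m := hm.1.1
      have hm0' : 0 < m' := hm'.1.1
      simp only [dif_pos hm0, dif_pos hm0'] at he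
      have h1 : m * g m hm0 = m' * g m' hm0' := by
        have e1 := hm.2; have e2 := hm'.2
        simp only [hG, dif_pos hm0] at e1
        simp only [hG, dif_pos hm0'] at e2
        rw [e1, e2]
      rw [he] at h1
      exact Nat.eq_of_mul_eq_mul_right (hFpos _ (hgF m' hm0')) h1
  rw [hcoe, Set.ncard_coe_finset]
  simpa using hcard

/-- If A ⊆ ℕ (positive integers) is multiplicatively syndetic, then A has
positive lower asymptotic density. -/
theorem mult_syndetic_pos_lower_density (A : Set ℕ)
    (hA : ∃ F : Finset ℕ, (∀ f ∈ F, 0 < f) ∧ ∀ n : ℕ, 0 < n → ∃ f ∈ F, n * f ∈ A) :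
    0 < Filter.atTop.liminf
      (fun n : ℕ => ((A ∩ Set.Icc 1 n).ncard : ℝ) / n) := by
  obtain ⟨F, hFpos, hF⟩ := hA
  have hFne : F.Nonempty := by
    obtain ⟨f, hf, -⟩ := hF 1 one_pos; exact ⟨f, hf⟩
  set M : ℕ := F.max' hFne with hMdef
  have hMpos : 0 < M := hFpos _ (F.max'_mem hFne)
  have hkpos : 0 < F.card := Finset.card_pos.mpr hFne
  set c : ℝ := 1 / (2 * M * F.card) with hc
  have hcpos : 0 < c := by
    apply div_pos one_pos
    positivity
  have hev : ∀ᶠ n : ℕ in atTop, c ≤ ((A ∩ Set.Icc 1 n).ncard : ℝ) / n := by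
    filter_upwards [eventually_ge_atTop (2 * M)] with n hn
    have hn0 : 0 < n := lt_of_lt_of_le (by positivity) hn
    set N : ℕ := n / M with hN
    have hsub : A ∩ Set.Icc 1 (N * M) ⊆ A ∩ Set.Icc 1 n := by
      apply Set.inter_subset_inter_right
      exact Set.Icc_subset_Icc_right (Nat.div_mul_le_self n M)
    have hfin : (A ∩ Set.Icc 1 n).Finite := (Set.finite_Icc 1 n).inter_of_right A
    have h1 : N ≤ F.card * (A ∩ Set.Icc 1 (N * M)).ncard :=
      count_lb A F hFpos hF M (fun f hf => F.le_max' f hf) N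
    have h2 : (A ∩ Set.Icc 1 (N * M)).ncard ≤ (A ∩ Set.Icc 1 n).ncard :=
      Set.ncard_le_ncard hsub hfin
    have h3 : n ≤ 2 * M * N := by
      have e1 : M * N + n % M = n := Nat.div_add_mod n M
      have e2 : n % M < M := Nat.mod_lt n hMpos
      calc n ≤ 2 * (M * N) := by omega
        _ = 2 * M * N := (mul_assoc 2 (M:ℕ) N).symm
    have h4 : n ≤ 2 * M * (F.card * (A ∩ Set.Icc 1 n).ncard) := by
      calc n ≤ 2 * M * N := h3
        _ ≤ 2 * M * (F.card * (A ∩ Set.Icc 1 n).ncard) := by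
            exact Nat.mul_le_mul_left _ (le_trans h1 (Nat.mul_le_mul_left _ h2))
    have h4' : (n : ℝ) ≤ 2 * M * F.card * (A ∩ Set.Icc 1 n).ncard := by
      have := (Nat.cast_le (α := ℝ)).mpr h4
      push_cast at this ⊢
      linarith
    rw [hc, le_div_iff₀ (by exact_mod_cast hn0), div_mul_eq_mul_div, one_mul,
      div_le_iff₀ (by positivity)]
    linarith
  have hub : ∀ n : ℕ, ((A ∩ Set.Icc 1 n).ncard : ℝ) / n ≤ 1 := by
    intro n
    apply div_le_one_of_le₀
    · have h1 : (A ∩ Set.Icc 1 n).ncard ≤ (Set.Icc 1 n).ncard :=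
        Set.ncard_le_ncard Set.inter_subset_right (Set.finite_Icc 1 n)
      have h2 : (Set.Icc 1 n).ncard = n := by
        rw [← Finset.coe_Icc, Set.ncard_coe_finset, Nat.card_Icc]; omega
      exact_mod_cast h1.trans_eq h2
    · positivity
  exact lt_of_lt_of_le hcpos (le_liminf_of_le
    (isCoboundedUnder_ge_of_le atTop hub) hev)
end

section
/- There exists an additively thick subset A of the positive integers (A contains arbitrarily long intervals of consecutive integers) such that A contains no set of the form {kx, ky, kxy} with k ≥ 1 and x, y ≥ 2. -/
/-- There exists an additively thick set of positive integers containing no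
configuration {kx, ky, kxy} with k ≥ 1, x,y ≥ 2. -/
theorem exists_thick_no_mult_pattern :
    ∃ A : Set ℕ, (∀ a ∈ A, 0 < a) ∧
      (∀ L : ℕ, ∃ m : ℕ, ∀ i : ℕ, m + 1 ≤ i → i ≤ m + L → i ∈ A) ∧
      ¬ ∃ k x y : ℕ, 1 ≤ k ∧ 2 ≤ x ∧ 2 ≤ y ∧
        k * x ∈ A ∧ k * y ∈ A ∧ k * x * y ∈ A := by
  set f : ℕ → ℕ := fun n => 4 ^ (4 ^ n) with hf
  have hfpos : ∀ n, 4 ≤ f n := by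
    intro n
    calc (4:ℕ) = 4 ^ (4 ^ 0) := by norm_num
    _ ≤ 4 ^ (4 ^ n) := Nat.pow_le_pow_right (by norm_num)
        (Nat.pow_le_pow_right (by norm_num) (Nat.zero_le n))
  have hnlt : ∀ n, n < f n := by
    intro n
    have h1 : n < 4 ^ n := Nat.lt_pow_self (by norm_num)
    calc n < 4 ^ n := h1
    _ ≤ 4 ^ (4 ^ n) := Nat.pow_le_pow_right (by norm_num) h1.le
  have hmono : ∀ {a b : ℕ}, a ≤ b → f a + a ≤ f b + b := by
    intro a b h
    exact Nat.add_le_add (Nat.pow_le_pow_right (by norm_num)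
      (Nat.pow_le_pow_right (by norm_num) h)) h
  have hsq : ∀ n, (f n + n) ^ 2 < f (n + 1) := by
    intro n
    have h3 : f (n + 1) = (f n) ^ 4 := by
      simp only [hf]
      rw [pow_succ, pow_mul]
    have h1 := hnlt n
    have h2 := hfpos n
    have h5 : 4 ≤ (f n) ^ 2 := by nlinarith
    calc (f n + n) ^ 2 < (2 * f n) ^ 2 :=
          Nat.pow_lt_pow_left (by omega) (by norm_num)
    _ = 4 * (f n) ^ 2 := by ring
    _ ≤ (f n) ^ 2 * (f n) ^ 2 := Nat.mul_le_mul_right _ h5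
    _ = (f n) ^ 4 := by ring
    _ = f (n + 1) := h3.symm
  refine ⟨{a | ∃ n, 1 ≤ n ∧ f n ≤ a ∧ a ≤ f n + n}, ?_, ?_, ?_⟩
  · rintro a ⟨n, -, h1, -⟩
    have := hfpos n; omega
  · intro L
    refine ⟨f (L + 1) - 1, fun i h1 h2 => ⟨L + 1, by omega, ?_, ?_⟩⟩
    · have := hfpos (L + 1); omega
    · have := hfpos (L + 1); omega
  · rintro ⟨k, x, y, hk, hx, hy, ⟨m', hm'1, hm'2, hm'3⟩, ⟨m, hm1, hm2, hm3⟩,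
      ⟨p, hp1, hp2, hp3⟩⟩
    set M := max m m' with hM
    have ha : k * x ≤ f M + M := le_trans hm'3 (hmono (le_max_right m m'))
    have hb : k * y ≤ f M + M := le_trans hm3 (hmono (le_max_left m m'))
    have hbig : f M ≤ k * x ∨ f M ≤ k * y := by
      rcases le_total m m' with h | h
      · left; rw [hM, max_eq_right h]; exact hm'2
      · right; rw [hM, max_eq_left h]; exact hm2
    -- k*x*y ≥ 2 * f M > f M + M
    have hlarge : f M + M < k * x * y := by
      have hM2 : M < f M := hnlt M
      rcases hbig with h | h
      · have : 2 * (k * x) ≤ k * x * y := by nlinarith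
        omega
      · have : 2 * (k * y) ≤ k * x * y := by nlinarith
        omega
    -- hence p > M
    have hpM : M + 1 ≤ p := by
      by_contra hcon
      push_neg at hcon
      have : k * x * y ≤ f M + M := le_trans hp3 (hmono (by omega))
      omega
    have h1 : f (M + 1) ≤ k * x * y := by
      calc f (M + 1) ≤ f p := Nat.pow_le_pow_right (by norm_num)
            (Nat.pow_le_pow_right (by norm_num) hpM)
      _ ≤ k * x * y := hp2
    have h2 : k * x * y ≤ (f M + M) ^ 2 := by
      have : k * x * y ≤ (k * x) * (k * y) := by nlinarith
      calc k * x * y ≤ (k * x) * (k * y) := this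
      _ ≤ (f M + M) * (f M + M) := Nat.mul_le_mul ha hb
      _ = (f M + M) ^ 2 := (sq (f M + M)).symm
    have := hsq M
    omega
end

section
/- Let r ∈ ℕ and for each i ∈ {1,...,r} let x_i, y_i, z_i be positive integers with x_i + z_i = 2y_i and x_i < y_i < z_i. Then for every subset α ⊆ {1,...,r} with |α| ≥ 2, writing x_α = ∏_{i∈α} x_i (and similarly y_α, z_α), we have x_α + z_α ≠ 2 y_α. -/
/-- Coordinatewise products of strictly increasing 3-term APs over at least two
indices never form a 3-term AP. -/
theorem prod_of_aps_not_ap (r : ℕ) (x y z : ℕ → ℕ)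
    (hpos : ∀ i ∈ Finset.Icc 1 r, 0 < x i)
    (hap : ∀ i ∈ Finset.Icc 1 r, x i + z i = 2 * y i)
    (hlt : ∀ i ∈ Finset.Icc 1 r, x i < y i ∧ y i < z i)
    (α : Finset ℕ) (hα : α ⊆ Finset.Icc 1 r) (hcard : 2 ≤ α.card) :
    (∏ i ∈ α, x i) + (∏ i ∈ α, z i) ≠ 2 * ∏ i ∈ α, y i := by
  -- basic monotonicity facts
  have hxy : ∀ s : Finset ℕ, s ⊆ Finset.Icc 1 r → (∏ i ∈ s, x i) ≤ ∏ i ∈ s, y i := by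
    intro s hs
    exact Finset.prod_le_prod (fun i hi => Nat.zero_le _)
      (fun i hi => le_of_lt (hlt i (hs hi)).1)
  have hyz : ∀ s : Finset ℕ, s ⊆ Finset.Icc 1 r → (∏ i ∈ s, y i) ≤ ∏ i ∈ s, z i := by
    intro s hs
    exact Finset.prod_le_prod (fun i hi => Nat.zero_le _)
      (fun i hi => le_of_lt (hlt i (hs hi)).2)
  -- strict: x-product < y-product on nonempty sets
  have hxy' : ∀ s : Finset ℕ, s ⊆ Finset.Icc 1 r → s.Nonempty →
      (∏ i ∈ s, x i) < ∏ i ∈ s, y i := by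
    intro s hs hne
    refine Finset.prod_lt_prod_of_nonempty ?_ (fun i hi => (hlt i (hs hi)).1) hne
    exact fun i hi => hpos i (hs hi)
  -- main inequality (weak version) by induction
  have key : ∀ s : Finset ℕ, s ⊆ Finset.Icc 1 r → s.Nonempty →
      2 * (∏ i ∈ s, y i) ≤ (∏ i ∈ s, x i) + ∏ i ∈ s, z i := by
    intro s hs hne
    induction hne using Finset.Nonempty.cons_induction with
    | singleton a =>
        simp only [Finset.prod_singleton]
        rw [hap a (hs (Finset.mem_singleton_self a))]
    | cons a s ha hne ih =>
        have hs' : s ⊆ Finset.Icc 1 r := fun i hi => hs (Finset.mem_cons.2 (Or.inr hi))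
        have haI : a ∈ Finset.Icc 1 r := hs (Finset.mem_cons_self a s)
        have ih' := ih hs'
        rw [Finset.prod_cons, Finset.prod_cons, Finset.prod_cons]
        have h1 := hxy s hs'
        have h2 := hyz s hs'
        have hap' := hap a haI
        have hl := hlt a haI
        zify at ih' h1 h2 hap' ⊢
        have h4 : 2 * ((y a:ℤ) * ∏ i ∈ s, (y i:ℤ)) = ((x a:ℤ) + (z a:ℤ)) * ∏ i ∈ s, (y i:ℤ) := by
          rw [hap']; ring
        nlinarith [h4, mul_nonneg (by push_cast; nlinarith [hl.1, hl.2] : (0:ℤ) ≤ (z a : ℤ) - x a)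
            (by linarith : (0:ℤ) ≤ (∏ i ∈ s, (y i : ℤ)) - ∏ i ∈ s, (x i : ℤ)),
          mul_nonneg (by positivity : (0:ℤ) ≤ (z a : ℤ))
            (by linarith : (0:ℤ) ≤ (∏ i ∈ s, (z i : ℤ)) - 2 * (∏ i ∈ s, (y i : ℤ)) + ∏ i ∈ s, (x i : ℤ))]
  -- now strict version for α
  intro heq
  obtain ⟨a, ha⟩ := Finset.card_pos.mp (by omega : 0 < α.card)
  set s := α.erase a with hsdef
  have hins : α = Finset.cons a s (Finset.notMem_erase a α) := by
    simp [hsdef, Finset.cons_eq_insert, Finset.insert_erase ha]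
  have hsne : s.Nonempty := by
    rw [← Finset.card_pos, Finset.card_erase_of_mem ha]; omega
  have hs' : s ⊆ Finset.Icc 1 r := fun i hi => hα (Finset.erase_subset a α hi)
  have haI : a ∈ Finset.Icc 1 r := hα ha
  rw [hins, Finset.prod_cons, Finset.prod_cons, Finset.prod_cons] at heq
  have h1 := hxy' s hs' hsne
  have h2 := hyz s hs'
  have h3 := key s hs' hsne
  have hap' := hap a haI
  have hl := hlt a haI
  zify at heq h1 h2 h3 hap'
  have h4 : 2 * ((y a:ℤ) * ∏ i ∈ s, (y i:ℤ)) = ((x a:ℤ) + (z a:ℤ)) * ∏ i ∈ s, (y i:ℤ) := by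
    rw [hap']; ring
  nlinarith [h4, mul_pos (by push_cast; nlinarith [hl.1, hl.2] : (0:ℤ) < (z a : ℤ) - x a)
      (by linarith : (0:ℤ) < (∏ i ∈ s, (y i : ℤ)) - ∏ i ∈ s, (x i : ℤ)),
    mul_nonneg (by positivity : (0:ℤ) ≤ (z a : ℤ))
      (by linarith : (0:ℤ) ≤ (∏ i ∈ s, (z i : ℤ)) - 2 * (∏ i ∈ s, (y i : ℤ)) + ∏ i ∈ s, (x i : ℤ))]
end

section
/- Let A be the multiplicative subsemigroup of the positive integers generated by a finite set {n_1, ..., n_k}. Then A does not contain arbitrarily long arithmetic progressions; more precisely, there is a bound L(k, n_1, ..., n_k) such that every arithmetic progression with nonzero common difference contained in A has length at most L. -/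
open Finset

private lemma sum_div_two_pow_le (n T : ℕ) : ∑ t ∈ Finset.range T, n / 2 ^ (1 + t) ≤ n := by
  induction T generalizing n with
  | zero => simp
  | succ T ih =>
    rw [Finset.sum_range_succ']
    have h1 : ∀ t : ℕ, n / 2 ^ (1 + (t + 1)) = (n / 2) / 2 ^ (1 + t) := by
      intro t
      rw [Nat.div_div_eq_div_mul]
      congr 1
      ring
    simp only [h1]
    have := ih (n / 2)
    simp only [pow_succ, pow_zero]
    omega

private lemma count_dvd_ap (a d len M : ℕ) (hM : 0 < M) (hMd : Nat.Coprime M d) :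
    ((Finset.range len).filter (fun j => M ∣ a + j * d)).card ≤ len / M + 1 := by
  set s := (Finset.range len).filter (fun j => M ∣ a + j * d) with hs
  rcases s.eq_empty_or_nonempty with h | h
  · simp [h]
  · set j0 := s.min' h with hj0
    have hmem := s.min'_mem h
    have h2 : M ∣ a + j0 * d := (Finset.mem_filter.1 hmem).2
    have hsub : s ⊆ (Finset.range (len / M + 1)).image (fun i => j0 + M * i) := by
      intro j hj
      have hjle : j0 ≤ j := s.min'_le j hj
      have h1 : M ∣ a + j * d := (Finset.mem_filter.1 hj).2
      have hjlen : j < len := Finset.mem_range.1 (Finset.mem_filter.1 hj).1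
      have heq : (a + j * d) - (a + j0 * d) = (j - j0) * d := by
        rw [Nat.add_sub_add_left, Nat.sub_mul]
      have hdvd : M ∣ j - j0 := by
        apply hMd.dvd_of_dvd_mul_right
        rw [← heq]
        exact Nat.dvd_sub h1 h2
      refine Finset.mem_image.2 ⟨(j - j0) / M, ?_, ?_⟩
      · rw [Finset.mem_range, Nat.lt_succ_iff]
        exact le_trans (Nat.div_le_div_right (by omega)) le_rfl
      · rw [Nat.mul_div_cancel' hdvd]; omega
    calc s.card ≤ _ := Finset.card_le_card hsub
      _ ≤ len / M + 1 := le_trans Finset.card_image_le (by simp)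

private lemma eq_prod_pow (P : Finset ℕ) (y : ℕ) (hy : 0 < y) (h : y.primeFactors ⊆ P) :
    y = ∏ q ∈ P, q ^ y.factorization q := by
  conv_lhs => rw [← Nat.factorization_prod_pow_eq_self hy.ne']
  exact Finsupp.prod_of_support_subset _ (by rwa [Nat.support_factorization]) _
    (fun q _ => pow_zero q)


private lemma key (P : Finset ℕ) (hP : ∀ q ∈ P, q.Prime) :
    ∃ L : ℕ, ∀ a d len : ℕ, 0 < a → 0 < d → Nat.Coprime a d →
      (∀ j < len, (a + j * d).primeFactors ⊆ P) → len ≤ L := by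
  set D := ∏ q ∈ P, q with hD
  set m := P.card with hm0
  refine ⟨max (4 * m + 4) ((2 * D) ^ 8), fun a d len ha hd hcop hsub => ?_⟩
  by_contra hlen
  push_neg at hlen
  have hlen1 : 4 * m + 4 < len := lt_of_le_of_lt (le_max_left _ _) hlen
  have hlen2 : (2 * D) ^ 8 < len := lt_of_le_of_lt (le_max_right _ _) hlen
  set Y := a + (len - 1) * d with hY
  have hYpos : 0 < Y := by omega
  have hypos : ∀ j : ℕ, 0 < a + j * d := fun j => by omega
  have hyle : ∀ j < len, a + j * d ≤ Y := by
    intro j hj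
    have h1 : j * d ≤ (len - 1) * d := Nat.mul_le_mul_right d (by omega)
    omega
  -- per-prime sum bound
  have hSq : ∀ q ∈ P, ∑ j ∈ range len, (a + j * d).factorization q ≤ len + Nat.log q Y := by
    intro q hq
    have hq2 := (hP q hq).two_le
    set T := Nat.log q Y with hT
    have hv : ∀ j < len, (a + j * d).factorization q ≤ T := by
      intro j hj
      rw [hT, Nat.le_log_iff_pow_le (by omega) hYpos.ne']
      exact le_trans (Nat.ordProj_le q (hypos j).ne') (hyle j hj)
    have hcard : ∀ j < len, (a + j * d).factorization q
        = ((Icc 1 T).filter (fun t => q ^ t ∣ a + j * d)).card := by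
      intro j hj
      have hfe : (Icc 1 T).filter (fun t => q ^ t ∣ a + j * d)
          = Icc 1 ((a + j * d).factorization q) := by
        ext t
        simp only [mem_filter, mem_Icc]
        rw [(hP q hq).pow_dvd_iff_le_factorization (hypos j).ne']
        have := hv j hj
        omega
      rw [hfe, Nat.card_Icc]
      omega
    calc ∑ j ∈ range len, (a + j * d).factorization q
        = ∑ j ∈ range len, ∑ t ∈ Icc 1 T, (if q ^ t ∣ a + j * d then 1 else 0) := by
          refine Finset.sum_congr rfl fun j hj => ?_
          rw [hcard j (mem_range.1 hj), Finset.card_filter]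
      _ = ∑ t ∈ Icc 1 T, ((range len).filter (fun j => q ^ t ∣ a + j * d)).card := by
          rw [Finset.sum_comm]
          exact Finset.sum_congr rfl fun t _ => (Finset.card_filter _ _).symm
      _ ≤ ∑ t ∈ Icc 1 T, (len / 2 ^ t + 1) := by
          refine Finset.sum_le_sum fun t ht => ?_
          have ht1 : 1 ≤ t := (mem_Icc.1 ht).1
          have h2t : (2:ℕ) ^ t ≤ q ^ t := Nat.pow_le_pow_left hq2 t
          by_cases hqd : q ∣ d
          · have hempty : (range len).filter (fun j => q ^ t ∣ a + j * d) = ∅ := by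
              rw [Finset.filter_eq_empty_iff]
              intro j _ hdvd
              have hq1 : q ∣ a + j * d := dvd_trans (dvd_pow_self q (by omega)) hdvd
              have hqjd : q ∣ j * d := Dvd.dvd.mul_left hqd j
              have hqa : q ∣ a := by
                have := Nat.dvd_sub hq1 hqjd
                simpa using this
              have hg1 : q ∣ 1 := hcop ▸ Nat.dvd_gcd hqa hqd
              exact absurd (Nat.le_of_dvd one_pos hg1) (by omega)
            rw [hempty]
            simp
          · have hcq : Nat.Coprime q d := ((hP q hq).coprime_iff_not_dvd).2 hqd
            refine le_trans (count_dvd_ap a d len (q ^ t) (by positivity)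
              (Nat.Coprime.pow_left _ hcq)) ?_
            have := Nat.div_le_div_right (c := 1) (le_refl len)
            exact Nat.add_le_add_right (Nat.div_le_div_left h2t (by positivity)) 1
      _ = (∑ t ∈ Icc 1 T, len / 2 ^ t) + T := by
          rw [Finset.sum_add_distrib, Finset.sum_const, Nat.card_Icc]
          simp
      _ ≤ len + T := by
          have h5 := sum_div_two_pow_le len T
          rw [← Finset.Ico_add_one_right_eq_Icc, Finset.sum_Ico_eq_sum_range]
          simpa using Nat.add_le_add_right h5 T
  -- product identity & upper bound
  have hprod_eq : ∏ j ∈ range len, (a + j * d)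
      = ∏ q ∈ P, q ^ (∑ j ∈ range len, (a + j * d).factorization q) := by
    have h1 : ∀ j ∈ range len, a + j * d = ∏ q ∈ P, q ^ (a + j * d).factorization q :=
      fun j hj => eq_prod_pow P _ (hypos j) (hsub j (mem_range.1 hj))
    rw [Finset.prod_congr rfl h1, Finset.prod_comm]
    exact Finset.prod_congr rfl fun q _ => Finset.prod_pow_eq_pow_sum _ _ _
  have hupper : ∏ j ∈ range len, (a + j * d) ≤ D ^ len * Y ^ m := by
    rw [hprod_eq]
    calc ∏ q ∈ P, q ^ (∑ j ∈ range len, (a + j * d).factorization q)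
        ≤ ∏ q ∈ P, q ^ (len + Nat.log q Y) :=
          Finset.prod_le_prod (fun q _ => Nat.zero_le _)
            (fun q hq => Nat.pow_le_pow_right (by have := (hP q hq).two_le; omega) (hSq q hq))
      _ = (∏ q ∈ P, q ^ len) * ∏ q ∈ P, q ^ Nat.log q Y := by
          rw [← Finset.prod_mul_distrib]
          exact Finset.prod_congr rfl fun q _ => pow_add q len _
      _ ≤ D ^ len * Y ^ m := by
          rw [Finset.prod_pow]
          exact Nat.mul_le_mul_left _
            (Finset.prod_le_pow_card _ _ _ fun q _ => Nat.pow_log_le_self q hYpos.ne')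
  -- lower bound
  set h := len / 2 with hh
  have hlow : Y ^ (len - h) ≤ 2 ^ (len - h) * ∏ j ∈ range len, (a + j * d) := by
    have h1 : ∀ j ∈ Ico h len, Y ≤ 2 * (a + j * d) := by
      intro j hj
      have hjh := (mem_Ico.1 hj).1
      have h2 : (len - 1) * d ≤ (2 * j) * d := Nat.mul_le_mul_right d (by omega)
      have h3 : (2 * j) * d = 2 * (j * d) := by ring
      rw [hY]
      omega
    calc Y ^ (len - h) = ∏ _j ∈ Ico h len, Y := by rw [Finset.prod_const, Nat.card_Ico]
      _ ≤ ∏ j ∈ Ico h len, 2 * (a + j * d) :=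
          Finset.prod_le_prod (fun _ _ => Nat.zero_le _) h1
      _ = 2 ^ (len - h) * ∏ j ∈ Ico h len, (a + j * d) := by
          rw [Finset.prod_mul_distrib, Finset.prod_const, Nat.card_Ico]
      _ ≤ 2 ^ (len - h) * ∏ j ∈ range len, (a + j * d) := by
          refine Nat.mul_le_mul_left _ (Finset.prod_le_prod_of_subset_of_one_le' ?_ ?_)
          · rw [Finset.range_eq_Ico]
            exact Finset.Ico_subset_Ico (Nat.zero_le _) le_rfl
          · intro j _ _
            exact hypos j
  -- combine
  have hcomb : Y ^ (len - h) ≤ (2 * D) ^ len * Y ^ m := by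
    calc Y ^ (len - h) ≤ 2 ^ (len - h) * (D ^ len * Y ^ m) :=
          le_trans hlow (Nat.mul_le_mul_left _ hupper)
      _ ≤ 2 ^ len * (D ^ len * Y ^ m) :=
          Nat.mul_le_mul_right _ (Nat.pow_le_pow_right (by omega) (by omega))
      _ = (2 * D) ^ len * Y ^ m := by rw [mul_pow]; ring
  set r := len - h - m with hr
  have hmr : m + r = len - h := by omega
  have hYr : Y ^ r ≤ (2 * D) ^ len := by
    have h6 : Y ^ m * Y ^ r ≤ Y ^ m * (2 * D) ^ len := by
      rw [← pow_add, hmr]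
      calc Y ^ (len - h) ≤ (2 * D) ^ len * Y ^ m := hcomb
        _ = Y ^ m * (2 * D) ^ len := by ring
    exact Nat.le_of_mul_le_mul_left h6 (pow_pos hYpos m)
  have hYlen : len ≤ Y := by
    have : len - 1 ≤ (len - 1) * d := Nat.le_mul_of_pos_right _ hd
    omega
  set c := len / 4 with hc
  have hD1 : 1 ≤ D := Finset.one_le_prod' fun q hq => (hP q hq).one_lt.le
  have h1 : len ^ c ≤ Y ^ c := Nat.pow_le_pow_left hYlen c
  have h2 : Y ^ c ≤ Y ^ r := Nat.pow_le_pow_right hYpos (by omega)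
  have h3 : (2 * D) ^ len ≤ ((2 * D) ^ 8) ^ c := by
    rw [← pow_mul]
    exact Nat.pow_le_pow_right (by omega) (by omega)
  have h4 : ((2 * D) ^ 8) ^ c < len ^ c := Nat.pow_lt_pow_left hlen2 (by omega)
  exact lt_irrefl _ (lt_of_le_of_lt (h1.trans (h2.trans (hYr.trans h3))) h4)


/-- A finitely generated multiplicative subsemigroup of ℕ contains no
arbitrarily long arithmetic progressions: there is a uniform bound on the
length of any AP with nonzero common difference contained in it. -/
theorem fin_gen_mult_semigroup_no_long_aps (k : ℕ) (n : Fin k → ℕ)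
    (hn : ∀ i, 0 < n i) :
    ∃ L : ℕ, ∀ a d len : ℕ, d ≠ 0 →
      (∀ j < len, ∃ e : Fin k → ℕ, (∃ i, e i ≠ 0) ∧ a + j * d = ∏ i, n i ^ e i) →
      len ≤ L := by
  obtain ⟨L, hL⟩ := key ((∏ i, n i).primeFactors)
    (fun q hq => Nat.prime_of_mem_primeFactors hq)
  refine ⟨L, fun a d len hd hyp => ?_⟩
  rcases Nat.eq_zero_or_pos len with h0 | h0
  · omega
  have hNpos : 0 < ∏ i, n i := Finset.prod_pos fun i _ => hn i
  have hterm : ∀ j < len, 0 < a + j * d ∧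
      (a + j * d).primeFactors ⊆ (∏ i, n i).primeFactors := by
    intro j hj
    obtain ⟨e, -, he⟩ := hyp j hj
    constructor
    · rw [he]
      exact Finset.prod_pos fun i _ => pow_pos (hn i) _
    · intro p hp
      rw [Nat.mem_primeFactors] at hp ⊢
      obtain ⟨hp1, hp2, -⟩ := hp
      refine ⟨hp1, ?_, hNpos.ne'⟩
      rw [he] at hp2
      obtain ⟨i, -, hpi⟩ := hp1.prime.exists_mem_finset_dvd hp2
      exact dvd_trans (hp1.dvd_of_dvd_pow hpi) (Finset.dvd_prod_of_mem _ (Finset.mem_univ i))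
  have ha : 0 < a := by
    have := (hterm 0 h0).1
    simpa using this
  set g := Nat.gcd a d with hg
  have hg0 : 0 < g := Nat.gcd_pos_of_pos_left _ ha
  have hga : g ∣ a := Nat.gcd_dvd_left a d
  have hgd : g ∣ d := Nat.gcd_dvd_right a d
  apply hL (a / g) (d / g) len (Nat.div_pos (Nat.le_of_dvd ha hga) hg0)
    (Nat.div_pos (Nat.le_of_dvd (Nat.pos_of_ne_zero hd) hgd) hg0)
    (Nat.coprime_div_gcd_div_gcd hg0)
  intro j hj
  have heq : (a / g + j * (d / g)) * g = a + j * d := by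
    rw [add_mul, mul_assoc, Nat.div_mul_cancel hga, Nat.div_mul_cancel hgd]
  have hdvd : (a / g + j * (d / g)) ∣ (a + j * d) := Dvd.intro_left g (by rw [mul_comm]; exact heq)
  obtain ⟨hpos, hsubP⟩ := hterm j hj
  exact (Nat.primeFactors_mono hdvd hpos.ne').trans hsubP
end

section
/- Let A be the multiplicative subsemigroup of the positive integers generated by a finite set of integers each at least 2. Then there exists a prime p such that A is not additively IP_p: there exist no positive integers m_1, ..., m_p such that every nonempty subset sum ∑_{i∈α} m_i (α ⊆ {1,...,p} nonempty) lies in A. -/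
/-- A finitely generated multiplicative subsemigroup of ℕ with generators ≥ 2
is not additively IP_p for some prime p. -/
theorem fin_gen_mult_semigroup_not_ip (k : ℕ) (n : Fin k → ℕ)
    (hn : ∀ i, 2 ≤ n i) :
    ∃ p : ℕ, p.Prime ∧
      ¬ ∃ m : Fin p → ℕ, (∀ i, 0 < m i) ∧
        ∀ α : Finset (Fin p), α.Nonempty →
          ∃ e : Fin k → ℕ, (∃ i, e i ≠ 0) ∧ (∑ i ∈ α, m i) = ∏ i, n i ^ e i := by
  obtain ⟨p, hple, hp⟩ := Nat.exists_infinite_primes (∏ i, n i + 1)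
  refine ⟨p, hp, ?_⟩
  rintro ⟨m, hm, hsum⟩
  have hprod_pos : 0 < ∏ i, n i :=
    Finset.prod_pos (fun i _ => lt_of_lt_of_le two_pos (hn i))
  have hpnd : ¬ p ∣ ∏ i, n i := Nat.not_dvd_of_pos_of_lt hprod_pos (by omega)
  set S : ℕ → ℕ := fun j => ∑ i ∈ Finset.univ.filter (fun i : Fin p => (i : ℕ) < j), m i
    with hS
  haveI : NeZero p := ⟨hp.pos.ne'⟩
  obtain ⟨a, ha, b, hb, hab, hSab⟩ :
      ∃ a ∈ Finset.range (p + 1), ∃ b ∈ Finset.range (p + 1),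
        a ≠ b ∧ (S a : ZMod p) = (S b : ZMod p) := by
    exact Finset.exists_ne_map_eq_of_card_lt_of_maps_to
      (s := Finset.range (p + 1)) (t := (Finset.univ : Finset (ZMod p)))
      (f := fun j => (S j : ZMod p)) (by simp [ZMod.card]) (fun a _ => Finset.mem_univ _)
  wlog hlt : a < b generalizing a b
  · exact this b hb a ha hab.symm hSab.symm (by omega)
  set α : Finset (Fin p) := Finset.univ.filter (fun i : Fin p => a ≤ (i : ℕ) ∧ (i : ℕ) < b)
    with hα
  have hb' : b ≤ p := by simpa [Nat.lt_succ_iff] using hb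
  have hαne : α.Nonempty := ⟨⟨a, lt_of_lt_of_le hlt hb'⟩, by simp [hα, hlt]⟩
  have hdecomp : S b = S a + ∑ i ∈ α, m i := by
    rw [hS]
    simp only
    rw [← Finset.sum_filter_add_sum_filter_not
      (Finset.univ.filter (fun i : Fin p => (i : ℕ) < b)) (fun i => (i : ℕ) < a)]
    congr 1
    · apply Finset.sum_congr _ (fun _ _ => rfl)
      ext i; simp; omega
    · apply Finset.sum_congr _ (fun _ _ => rfl)
      ext i; simp [hα]; omega
  have h0 : ((∑ i ∈ α, m i : ℕ) : ZMod p) = 0 := by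
    have h1 : ((S a : ZMod p) + ((∑ i ∈ α, m i : ℕ) : ZMod p)) = (S a : ZMod p) := by
      rw [← Nat.cast_add, ← hdecomp, ← hSab]
    exact add_eq_left.mp h1
  have hdvd : p ∣ ∑ i ∈ α, m i := (ZMod.natCast_eq_zero_iff _ _).mp h0
  obtain ⟨e, _, heq⟩ := hsum α hαne
  rw [heq] at hdvd
  obtain ⟨i, _, hi⟩ := (Nat.Prime.prime hp).dvd_finset_prod_iff _ |>.mp hdvd
  exact hpnd ((hp.dvd_of_dvd_pow hi).trans (Finset.dvd_prod_of_mem _ (Finset.mem_univ i)))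
end

section
/- Let x be a real number, ε > 0, and let r be a natural number with r > 2/ε. Then for any positive integers n_1, ..., n_r there exists a nonempty subset α ⊆ {1,...,r} such that ‖(∑_{i∈α} n_i)·x‖ ≤ ε/2, where ‖t‖ denotes the distance from t to the nearest integer. -/
/-- For r > 2/ε, the set {n : ‖n·x‖ ≤ ε/2} is IP_r*: every collection of r
positive integers has a nonempty subset whose sum s satisfies ‖s·x‖ ≤ ε/2. -/
theorem subset_sum_close_to_integer (x : ℝ) (ε : ℝ) (hε : 0 < ε)
    (r : ℕ) (hr : (2 : ℝ) / ε < r) (m : ℕ → ℕ) (hm : ∀ i, 0 < m i) :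
    ∃ α : Finset ℕ, α ⊆ Finset.Icc 1 r ∧ α.Nonempty ∧
      ∃ k : ℤ, |((∑ i ∈ α, m i : ℕ) : ℝ) * x - (k : ℝ)| ≤ ε / 2 := by
  have hrpos : (0 : ℝ) < r := lt_trans (div_pos two_pos hε) hr
  have hrpos' : 0 < r := by exact_mod_cast hrpos
  -- partial sums
  set S : ℕ → ℕ := fun n => ∑ t ∈ Finset.Ioc 0 n, m t with hS
  set f : ℕ → ℕ := fun n => (⌊Int.fract ((S n : ℝ) * x) * r⌋).toNat with hf
  have hmaps : ∀ n ∈ Finset.range (r + 1), f n ∈ Finset.range r := by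
    intro n _
    simp only [Finset.mem_range, hf]
    have h0 : (0:ℝ) ≤ Int.fract ((S n : ℝ) * x) := Int.fract_nonneg _
    have h1 : Int.fract ((S n : ℝ) * x) < 1 := Int.fract_lt_one _
    have : ⌊Int.fract ((S n : ℝ) * x) * r⌋ < r := by
      apply Int.floor_lt.2
      push_cast
      nlinarith
    omega
  obtain ⟨i, hi, j, hj, hij, hfij⟩ :=
    Finset.exists_ne_map_eq_of_card_lt_of_maps_to (by simp) hmaps
  -- wlog i < j
  wlog hlt : i < j generalizing i j
  · exact this j hj i hi hij.symm hfij.symm (by omega)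
  have hjr : j ≤ r := by have := Finset.mem_range.1 hj; omega
  set a : ℝ := (S j : ℝ) * x
  set b : ℝ := (S i : ℝ) * x
  have hfloor : ⌊Int.fract a * r⌋ = ⌊Int.fract b * r⌋ := by
    have ha : 0 ≤ ⌊Int.fract ((S j : ℝ) * x) * r⌋ :=
      Int.floor_nonneg.2 (mul_nonneg (Int.fract_nonneg _) hrpos.le)
    have hb : 0 ≤ ⌊Int.fract ((S i : ℝ) * x) * r⌋ :=
      Int.floor_nonneg.2 (mul_nonneg (Int.fract_nonneg _) hrpos.le)
    have h := hfij
    simp only [hf] at h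
    show ⌊Int.fract ((S j : ℝ) * x) * r⌋ = ⌊Int.fract ((S i : ℝ) * x) * r⌋
    omega
  have habs : |Int.fract a * r - Int.fract b * r| < 1 :=
    Int.abs_sub_lt_one_of_floor_eq_floor hfloor
  have hclose : |Int.fract a - Int.fract b| ≤ ε / 2 := by
    have h1 : |Int.fract a - Int.fract b| * r < 1 := by
      rw [← sub_mul, abs_mul, abs_of_pos hrpos] at habs
      exact habs
    have h2 : |Int.fract a - Int.fract b| < 1 / r := by
      rw [lt_div_iff₀ hrpos]; linarith
    have h3 : 1 / (r : ℝ) ≤ ε / 2 := by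
      rw [div_le_div_iff₀ hrpos two_pos]
      have := (div_lt_iff₀ hε).1 hr
      nlinarith
    linarith
  refine ⟨Finset.Ioc i j, ?_, ?_, ⌊a⌋ - ⌊b⌋, ?_⟩
  · intro t ht
    simp only [Finset.mem_Ioc] at ht
    simp only [Finset.mem_Icc]
    omega
  · exact ⟨j, Finset.mem_Ioc.2 ⟨hlt, le_refl _⟩⟩
  · have hsum : S i + ∑ t ∈ Finset.Ioc i j, m t = S j := by
      simp only [hS]
      rw [Finset.sum_Ioc_consecutive _ (Nat.zero_le i) hlt.le]
    have hcast : ((∑ t ∈ Finset.Ioc i j, m t : ℕ) : ℝ) * x = a - b := by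
      have : ((∑ t ∈ Finset.Ioc i j, m t : ℕ) : ℝ) = (S j : ℝ) - (S i : ℝ) := by
        rw [← hsum]; push_cast; ring
      rw [this]; simp only [a, b]; ring
    rw [hcast]
    have : a - b - ((⌊a⌋ - ⌊b⌋ : ℤ) : ℝ) = Int.fract a - Int.fract b := by
      simp only [Int.fract]; push_cast; ring
    rw [this]
    exact hclose
end

section
/- There is no sequence (F_N) of finite nonempty subsets of the positive integers which is simultaneously a Følner sequence for (ℕ, +) and for (ℕ, ·). -/
open Finset

lemma doubly_folner_key (F : Finset ℕ) :
    F.card ≤ 2 * (symmDiff (F.image (fun n => 2 * n)) F).card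
      + (symmDiff (F.image (fun n => 1 + n)) F).card := by
  classical
  set A := F.filter (fun n => n % 2 = 0) with hA
  set B := F.filter (fun n => ¬ n % 2 = 0) with hB
  have hsum : A.card + B.card = F.card := Finset.card_filter_add_card_filter_not _
  have hBsub : B ⊆ symmDiff (F.image (fun n => 2 * n)) F := by
    intro n hn
    rw [Finset.mem_filter] at hn
    rw [Finset.mem_symmDiff]
    right
    refine ⟨hn.1, ?_⟩
    intro hmem
    rw [Finset.mem_image] at hmem
    obtain ⟨m, _, hm⟩ := hmem
    exact hn.2 (by omega)
  have hB2 : B.card ≤ (symmDiff (F.image (fun n => 2 * n)) F).card :=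
    Finset.card_le_card hBsub
  have hAimg : A.image (fun n => 1 + n) ⊆ B ∪ symmDiff (F.image (fun n => 1 + n)) F := by
    intro x hx
    rw [Finset.mem_image] at hx
    obtain ⟨n, hn, rfl⟩ := hx
    rw [Finset.mem_filter] at hn
    by_cases hxF : 1 + n ∈ F
    · apply Finset.mem_union_left
      rw [Finset.mem_filter]
      exact ⟨hxF, by omega⟩
    · apply Finset.mem_union_right
      rw [Finset.mem_symmDiff]
      left
      exact ⟨Finset.mem_image_of_mem _ hn.1, hxF⟩
  have hAcard : A.card ≤ B.card + (symmDiff (F.image (fun n => 1 + n)) F).card := by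
    have h1 : (A.image (fun n => 1 + n)).card = A.card :=
      Finset.card_image_of_injective _ (fun a b h => by omega)
    calc A.card = (A.image (fun n => 1 + n)).card := h1.symm
      _ ≤ (B ∪ symmDiff (F.image (fun n => 1 + n)) F).card := Finset.card_le_card hAimg
      _ ≤ B.card + (symmDiff (F.image (fun n => 1 + n)) F).card := Finset.card_union_le _ _
  omega

/-- No sequence of finite nonempty subsets of the positive integers is
simultaneously a Følner sequence for (ℕ,+) and for (ℕ,·). -/
theorem no_doubly_folner_sequence :
    ¬ ∃ F : ℕ → Finset ℕ, (∀ N, (F N).Nonempty) ∧ (∀ N, ∀ n ∈ F N, 0 < n) ∧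
      (∀ s : ℕ, 0 < s →
        Filter.Tendsto
          (fun N => ((symmDiff ((F N).image (fun n => s + n)) (F N)).card : ℝ) / (F N).card)
          Filter.atTop (nhds 0)) ∧
      (∀ s : ℕ, 0 < s →
        Filter.Tendsto
          (fun N => ((symmDiff ((F N).image (fun n => s * n)) (F N)).card : ℝ) / (F N).card)
          Filter.atTop (nhds 0)) := by
  rintro ⟨F, hne, -, hadd, hmul⟩
  set f₁ : ℕ → ℝ :=
    fun N => ((symmDiff ((F N).image (fun n => 1 + n)) (F N)).card : ℝ) / (F N).card
  set f₂ : ℕ → ℝ :=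
    fun N => ((symmDiff ((F N).image (fun n => 2 * n)) (F N)).card : ℝ) / (F N).card
  have h1 : Filter.Tendsto f₁ Filter.atTop (nhds 0) := hadd 1 one_pos
  have h2 : Filter.Tendsto f₂ Filter.atTop (nhds 0) := hmul 2 two_pos
  have hlim : Filter.Tendsto (fun N => 2 * f₂ N + f₁ N) Filter.atTop (nhds 0) := by
    have := (h2.const_mul 2).add h1
    simpa using this
  have hge : ∀ N, (1 : ℝ) ≤ 2 * f₂ N + f₁ N := by
    intro N
    have hpos : (0 : ℝ) < (F N).card := by
      exact_mod_cast Finset.card_pos.mpr (hne N)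
    have hkey := doubly_folner_key (F N)
    have hkey' : ((F N).card : ℝ) ≤
        2 * ((symmDiff ((F N).image (fun n => 2 * n)) (F N)).card : ℝ)
          + ((symmDiff ((F N).image (fun n => 1 + n)) (F N)).card : ℝ) := by
      exact_mod_cast hkey
    have : (1 : ℝ) ≤ (2 * ((symmDiff ((F N).image (fun n => 2 * n)) (F N)).card : ℝ)
          + ((symmDiff ((F N).image (fun n => 1 + n)) (F N)).card : ℝ)) / (F N).card := by
      rw [le_div_iff₀ hpos, one_mul]
      exact hkey'
    calc (1 : ℝ) ≤ _ := this
      _ = 2 * f₂ N + f₁ N := by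
        simp only [f₁, f₂]
        ring
  have : (1 : ℝ) ≤ 0 := ge_of_tendsto' hlim hge
  linarith
end

section
/- Let φ: S → T be a homomorphism of semigroups, and let r, t be positive integers. If A ⊆ S is an IP_r* set in S and φ(S) is an IP_t* set in T, then φ(A) is an IP_{rt}* set in T. -/
/-- Ordered product of a list of terms of a sequence in a semigroup
(the empty list is given the junk value `s 0`). -/
def ipProd {S : Type*} [Mul S] (s : ℕ → S) : List ℕ → S
  | [] => s 0
  | [i] => s i
  | i :: j :: rest => s i * ipProd s (j :: rest)

theorem ipProd_cons {S : Type*} [Mul S] (s : ℕ → S) (i : ℕ) (l : List ℕ) (hl : l ≠ []) :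
    ipProd s (i :: l) = s i * ipProd s l := by
  cases l with
  | nil => simp at hl
  | cons j rest => rfl

theorem ipProd_append {S : Type*} [Semigroup S] (s : ℕ → S) (l₁ l₂ : List ℕ)
    (h₁ : l₁ ≠ []) (h₂ : l₂ ≠ []) :
    ipProd s (l₁ ++ l₂) = ipProd s l₁ * ipProd s l₂ := by
  induction l₁ with
  | nil => simp at h₁
  | cons a l ih =>
    cases l with
    | nil => simp [ipProd_cons s a l₂ h₂, ipProd]
    | cons b rest =>
      rw [List.cons_append, ipProd_cons s a _ (by simp), ipProd_cons s a _ (by simp),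
        ih (by simp), mul_assoc]

theorem ipProd_hom {S T : Type*} [Mul S] [Mul T] (φ : S → T)
    (hmul : ∀ a b : S, φ (a * b) = φ a * φ b) (s : ℕ → S) (l : List ℕ) :
    φ (ipProd s l) = ipProd (φ ∘ s) l := by
  induction l with
  | nil => rfl
  | cons a l ih =>
    cases l with
    | nil => rfl
    | cons b rest =>
      rw [ipProd_cons _ a _ (by simp), ipProd_cons _ a _ (by simp), hmul, ih]
      rfl

theorem ipProd_map {S : Type*} [Mul S] (u : ℕ → S) (f : ℕ → ℕ) (l : List ℕ) (hl : l ≠ []) :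
    ipProd u (l.map f) = ipProd (fun i => u (f i)) l := by
  induction l with
  | nil => simp at hl
  | cons a l ih =>
    cases l with
    | nil => rfl
    | cons b rest =>
      rw [List.map_cons, ipProd_cons _ _ _ (by simp), ipProd_cons _ _ _ (by simp), ih (by simp)]

theorem ipProd_flatMap {S : Type*} [Semigroup S] (u : ℕ → S) (f : ℕ → List ℕ) (l : List ℕ)
    (hl : l ≠ []) (hf : ∀ i ∈ l, f i ≠ []) :
    ipProd u (l.flatMap f) = ipProd (fun i => ipProd u (f i)) l := by
  induction l with
  | nil => simp at hl
  | cons a l ih =>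
    cases l with
    | nil => simp [ipProd]
    | cons b rest =>
      have hfb : (b :: rest).flatMap f ≠ [] := by
        rw [List.flatMap_cons]
        intro h
        rw [List.append_eq_nil_iff] at h
        exact hf b (by simp) h.1
      rw [List.flatMap_cons, ipProd_append u _ _ (hf a (by simp)) hfb,
        ih (by simp) (fun i hi => hf i (by simp [hi])),
        ipProd_cons (fun i => ipProd u (f i)) a (b :: rest) (by simp)]

theorem sorted_flatMap_lt {f : ℕ → List ℕ} {l : List ℕ} (hl : l.Pairwise (· < ·))
    (hf : ∀ i ∈ l, (f i).Pairwise (· < ·))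
    (hsep : ∀ i ∈ l, ∀ j ∈ l, i < j → ∀ x ∈ f i, ∀ y ∈ f j, x < y) :
    (l.flatMap f).Pairwise (· < ·) := by
  induction l with
  | nil => simp
  | cons a l ih =>
    rw [List.flatMap_cons, List.pairwise_append]
    refine ⟨hf a (by simp), ih (List.Pairwise.of_cons hl) (fun i hi => hf i (by simp [hi]))
      (fun i hi j hj hij => hsep i (by simp [hi]) j (by simp [hj]) hij), ?_⟩
    intro x hx y hy
    obtain ⟨j, hj, hyj⟩ := List.mem_flatMap.1 hy
    exact hsep a (by simp) j (by simp [hj]) (List.rel_of_pairwise_cons hl hj) x hx y hyj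

/-- If A is IP_r* in S and φ(S) is IP_t* in T then φ(A) is IP_{rt}* in T. -/
theorem image_ip_star {S T : Type*} [Semigroup S] [Semigroup T] (φ : S → T)
    (hmul : ∀ a b : S, φ (a * b) = φ a * φ b) (r t : ℕ) (hr : 0 < r) (ht : 0 < t)
    (A : Set S)
    (hA : ∀ s : ℕ → S, ∃ α : Finset ℕ, α ⊆ Finset.Icc 1 r ∧ α.Nonempty ∧
        ipProd s (α.sort (· ≤ ·)) ∈ A)
    (hφS : ∀ u : ℕ → T, ∃ α : Finset ℕ, α ⊆ Finset.Icc 1 t ∧ α.Nonempty ∧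
        ipProd u (α.sort (· ≤ ·)) ∈ Set.range φ) :
    ∀ u : ℕ → T, ∃ α : Finset ℕ, α ⊆ Finset.Icc 1 (r * t) ∧ α.Nonempty ∧
        ipProd u (α.sort (· ≤ ·)) ∈ φ '' A := by
  intro u
  choose αf hαf₁ hαf₂ hαf₃ using fun i => hφS (fun j => u ((i - 1) * t + j))
  choose sf hs using hαf₃
  obtain ⟨β, hβ₁, hβ₂, hβ₃⟩ := hA sf
  have hsuccpred : ∀ i : ℕ, 1 ≤ i → (i - 1) * t + t = i * t := by
    intro i hi
    calc (i - 1) * t + t = ((i - 1) + 1) * t := (Nat.succ_mul _ _).symm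
    _ = i * t := by congr 1; omega
  have hαne : ∀ i, (αf i).sort (· ≤ ·) ≠ [] := by
    intro i h
    obtain ⟨x, hx⟩ := hαf₂ i
    have : x ∈ (αf i).sort (· ≤ ·) := (Finset.mem_sort _).2 hx
    simp [h] at this
  have hβne : β.sort (· ≤ ·) ≠ [] := by
    intro h
    obtain ⟨x, hx⟩ := hβ₂
    have : x ∈ β.sort (· ≤ ·) := (Finset.mem_sort _).2 hx
    simp [h] at this
  set L : List ℕ :=
    (β.sort (· ≤ ·)).flatMap (fun i => ((αf i).sort (· ≤ ·)).map (fun j => (i - 1) * t + j))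
    with hLdef
  have hmem : ∀ x ∈ L, 1 ≤ x ∧ x ≤ r * t := by
    intro x hx
    rw [hLdef, List.mem_flatMap] at hx
    obtain ⟨i, hi, hx⟩ := hx
    rw [List.mem_map] at hx
    obtain ⟨j, hj, rfl⟩ := hx
    rw [Finset.mem_sort] at hi hj
    have hi' := Finset.mem_Icc.1 (hβ₁ hi)
    have hj' := Finset.mem_Icc.1 (hαf₁ i hj)
    refine ⟨le_trans hj'.1 (Nat.le_add_left _ _), ?_⟩
    calc (i - 1) * t + j ≤ (r - 1) * t + t :=
      Nat.add_le_add (Nat.mul_le_mul_right t (by omega)) hj'.2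
    _ = r * t := hsuccpred r hr
  have hLsorted : L.Pairwise (· < ·) := by
    apply sorted_flatMap_lt (Finset.sortedLT_sort β).pairwise
    · intro i _
      refine List.Pairwise.map _ ?_ (Finset.sortedLT_sort (αf i)).pairwise
      intro a b hab
      omega
    · intro i hi j hj hij x hx y hy
      rw [List.mem_map] at hx hy
      obtain ⟨a, ha, rfl⟩ := hx
      obtain ⟨b, hb, rfl⟩ := hy
      rw [Finset.mem_sort] at ha hb hi hj
      have ha' := Finset.mem_Icc.1 (hαf₁ i ha)
      have hb' := Finset.mem_Icc.1 (hαf₁ j hb)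
      have hi' := Finset.mem_Icc.1 (hβ₁ hi)
      have hj' := Finset.mem_Icc.1 (hβ₁ hj)
      have h1 : (i - 1) * t + t ≤ (j - 1) * t := by
        calc (i - 1) * t + t = i * t := hsuccpred i hi'.1
        _ ≤ (j - 1) * t := Nat.mul_le_mul_right t (by omega)
      calc (i - 1) * t + a < (i - 1) * t + t + 1 := by omega
      _ ≤ (j - 1) * t + 1 := by omega
      _ ≤ (j - 1) * t + b := by omega
  have hLnodup : L.Nodup := hLsorted.imp (fun h => Nat.ne_of_lt h)
  have hLne : L ≠ [] := by
    obtain ⟨a, ha⟩ := hβ₂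
    obtain ⟨b, hb⟩ := hαf₂ a
    exact List.ne_nil_of_mem (List.mem_flatMap.2 ⟨a, (Finset.mem_sort _).2 ha,
      List.mem_map.2 ⟨b, (Finset.mem_sort _).2 hb, rfl⟩⟩)
  have hsortL : (L.toFinset).sort (· ≤ ·) = L :=
    (List.toFinset_sort (· ≤ ·) hLnodup).2 (hLsorted.imp le_of_lt)
  refine ⟨L.toFinset, ?_, ?_, ?_⟩
  · intro x hx
    rw [List.mem_toFinset] at hx
    exact Finset.mem_Icc.2 (hmem x hx)
  · obtain ⟨a, ha⟩ := List.exists_mem_of_ne_nil L hLne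
    exact ⟨a, List.mem_toFinset.2 ha⟩
  · rw [hsortL]
    refine ⟨ipProd sf (β.sort (· ≤ ·)), hβ₃, ?_⟩
    rw [ipProd_hom φ hmul, hLdef, ipProd_flatMap u _ _ hβne ?_]
    · congr 1
      funext i
      rw [ipProd_map u _ _ (hαne i)]
      show φ (sf i) = _
      exact (hs i)
    · intro i _ h
      exact hαne i (List.map_eq_nil_iff.1 h)
end

section
/- Let φ: ℚ \ {0} → {−1, 1} be a nonconstant completely multiplicative function (φ(xy) = φ(x)φ(y) for all nonzero rationals x, y). Then φ^{-1}({1}) is additively thick in ℚ: for every finite set F ⊆ ℚ there exists x ∈ ℚ with x + F ⊆ φ^{-1}({1}). The same holds for φ^{-1}({−1}). -/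
section Aux

variable (φ : ℚ → ℤ)
    (hval : ∀ x : ℚ, x ≠ 0 → φ x = 1 ∨ φ x = -1)
    (hmul : ∀ x y : ℚ, x ≠ 0 → y ≠ 0 → φ (x * y) = φ x * φ y)

include hval hmul

private lemma phi_one' : φ 1 = 1 := by
  have h := hmul 1 1 one_ne_zero one_ne_zero
  rw [one_mul] at h
  rcases hval 1 one_ne_zero with h1 | h1
  · exact h1
  · rw [h1] at h; norm_num at h

private lemma phi_inv' (x : ℚ) (hx : x ≠ 0) : φ x⁻¹ = φ x := by
  have h := hmul x⁻¹ x (inv_ne_zero hx) hx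
  rw [inv_mul_cancel₀ hx, phi_one' φ hval hmul] at h
  have hxx : φ x * φ x = 1 := by rcases hval x hx with h1 | h1 <;> rw [h1] <;> norm_num
  calc φ x⁻¹ = φ x⁻¹ * (φ x * φ x) := by rw [hxx, mul_one]
    _ = (φ x⁻¹ * φ x) * φ x := by ring
    _ = φ x := by rw [← h]; ring

private lemma phi_div' (x y : ℚ) (hx : x ≠ 0) (hy : y ≠ 0) : φ (x / y) = φ x * φ y := by
  rw [div_eq_mul_inv, hmul x y⁻¹ hx (inv_ne_zero hy), phi_inv' φ hval hmul y hy]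

/-- MONO: every finite set has a translate avoiding 0 on which φ is constant. -/
private lemma mono' (F : Finset ℚ) :
    ∃ x : ℚ, ∃ δ : ℤ, (δ = 1 ∨ δ = -1) ∧ ∀ f ∈ F, x + f ≠ 0 ∧ φ (x + f) = δ := by
  classical
  set C : ℚ → Fin 3 := fun y => if y = 0 then 0 else if φ y = 1 then 1 else 2 with hC
  set S : Finset ℚ := insert 0 (insert 1 F) with hS
  obtain ⟨a, ha, b, c, hc⟩ := Combinatorics.exists_mono_homothetic_copy S C
  have hane : (a : ℚ) ≠ 0 := Nat.cast_ne_zero.mpr ha.ne'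
  have hCzero : ∀ y : ℚ, C y = 0 → y = 0 := by
    intro y hy
    by_contra h0
    simp only [hC, if_neg h0] at hy
    split_ifs at hy <;> exact absurd hy (by decide)
  have hc0 : c ≠ 0 := by
    intro hc0
    have h0 : C (a • (0 : ℚ) + b) = c := hc 0 (by simp [hS])
    have h1 : C (a • (1 : ℚ) + b) = c := hc 1 (by simp [hS])
    rw [smul_zero, zero_add, hc0] at h0
    have hb : b = 0 := hCzero b h0
    rw [hc0] at h1
    have := hCzero _ h1
    rw [hb, add_zero, nsmul_eq_mul, mul_one] at this
    exact hane this
  set δ' : ℤ := if c = 1 then 1 else -1 with hδ'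
  have key : ∀ y : ℚ, C y = c → y ≠ 0 ∧ φ y = δ' := by
    intro y hy
    have hy0 : y ≠ 0 := by
      intro h; apply hc0; rw [← hy, h]; simp [hC]
    refine ⟨hy0, ?_⟩
    simp only [hC, if_neg hy0] at hy
    by_cases h1 : φ y = 1
    · rw [if_pos h1] at hy
      rw [hδ', if_pos hy.symm, h1]
    · rw [if_neg h1] at hy
      have : c ≠ 1 := by rw [← hy]; decide
      rw [hδ', if_neg this]
      rcases hval y hy0 with h | h
      · exact absurd h h1
      · exact h
  have hφa : φ (a : ℚ) = 1 ∨ φ (a : ℚ) = -1 := hval _ hane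
  refine ⟨b / a, δ' * φ (a : ℚ), ?_, ?_⟩
  · rcases hφa with h | h <;> rw [hδ'] <;> split_ifs <;> rw [h] <;> norm_num
  · intro f hf
    have hfS : f ∈ S := by simp [hS, hf]
    obtain ⟨hne, hφ⟩ := key _ (hc f hfS)
    rw [nsmul_eq_mul] at hne hφ
    have hxf : b / a + f = ((a : ℚ) * f + b) / a := by field_simp; ring
    constructor
    · rw [hxf]
      exact div_ne_zero hne hane
    · rw [hxf, phi_div' φ hval hmul _ _ hne hane, hφ]

end Aux

/-- For a nonconstant completely multiplicative φ : ℚ \ {0} → {−1,1}, both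
φ⁻¹({1}) and φ⁻¹({−1}) are additively thick in ℚ. -/
theorem mult_even_odd_rationals_thick (φ : ℚ → ℤ)
    (hval : ∀ x : ℚ, x ≠ 0 → φ x = 1 ∨ φ x = -1)
    (hmul : ∀ x y : ℚ, x ≠ 0 → y ≠ 0 → φ (x * y) = φ x * φ y)
    (hnc : ∃ x y : ℚ, x ≠ 0 ∧ y ≠ 0 ∧ φ x ≠ φ y) :
    (∀ F : Finset ℚ, ∃ x : ℚ, ∀ f ∈ F, x + f ≠ 0 ∧ φ (x + f) = 1) ∧
    (∀ F : Finset ℚ, ∃ x : ℚ, ∀ f ∈ F, x + f ≠ 0 ∧ φ (x + f) = -1) := by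
  classical
  -- find q with φ q = -1
  obtain ⟨u, v, hu, hv, huv⟩ := hnc
  have hq : ∃ q : ℚ, q ≠ 0 ∧ φ q = -1 := by
    rcases hval u hu with h1 | h1 <;> rcases hval v hv with h2 | h2
    · exact absurd (h1.trans h2.symm) huv
    · exact ⟨v, hv, h2⟩
    · exact ⟨u, hu, h1⟩
    · exact ⟨u, hu, h1⟩
  obtain ⟨q, hq0, hqv⟩ := hq
  -- combined claim: every value ε ∈ {1, -1} is achievable
  have main : ∀ (ε : ℤ), (ε = 1 ∨ ε = -1) → ∀ F : Finset ℚ,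
      ∃ x : ℚ, ∀ f ∈ F, x + f ≠ 0 ∧ φ (x + f) = ε := by
    intro ε hε F
    obtain ⟨x, δ, hδ, hx⟩ := mono' φ hval hmul (F ∪ F.image (fun f => q * f))
    by_cases hde : δ = ε
    · exact ⟨x, fun f hf => by
        obtain ⟨h1, h2⟩ := hx f (Finset.mem_union_left _ hf)
        exact ⟨h1, hde ▸ h2⟩⟩
    · -- then ε = -δ; divide by q
      have hεδ : ε = -δ := by
        rcases hδ with h | h <;> rcases hε with h' | h' <;> simp [h, h'] at hde ⊢
      refine ⟨x / q, fun f hf => ?_⟩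
      have hqf : q * f ∈ F ∪ F.image (fun f => q * f) :=
        Finset.mem_union_right _ (Finset.mem_image_of_mem _ hf)
      obtain ⟨h1, h2⟩ := hx _ hqf
      have hxf : x / q + f = (x + q * f) / q := by field_simp
      constructor
      · rw [hxf]; exact div_ne_zero h1 hq0
      · rw [hxf, phi_div' φ hval hmul _ _ h1 hq0, h2, hqv, hεδ]
        ring
  exact ⟨main 1 (Or.inl rfl), main (-1) (Or.inr rfl)⟩
end

section
/- Let (d_i) be a sequence of positive integers with d_i → ∞ and d_i | d_j whenever i ≤ j, and let (A_i) be a sequence of finite subsets of ℕ. Then the set A = ⋃_{i=1}^∞ d_i·A_i satisfies: for every x ∈ ℕ, the set A ∩ (A − x) = {a ∈ A : a + x ∈ A} is finite. Consequently A is not an additive IP set. -/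
/-- For a divisible sequence (d_i) tending to infinity and finite sets A_i of
positive integers, A = ⋃ d_i·A_i has all difference-pair sets finite, and
consequently A is not an additive IP set. -/
theorem union_dilates_not_ip (d : ℕ → ℕ) (hd : ∀ i, 0 < d i)
    (htend : Filter.Tendsto d Filter.atTop Filter.atTop)
    (hdvd : ∀ i j, i ≤ j → d i ∣ d j)
    (A : ℕ → Finset ℕ) (hApos : ∀ i, ∀ b ∈ A i, 0 < b) :
    (∀ x : ℕ, 0 < x →
      {a : ℕ | (∃ i, ∃ b ∈ A i, a = d i * b) ∧
               (∃ i, ∃ b ∈ A i, a + x = d i * b)}.Finite) ∧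
    ¬ ∃ n : ℕ → ℕ, (∀ i, 0 < n i) ∧
        ∀ α : Finset ℕ, α.Nonempty →
          ∃ i, ∃ b ∈ A i, (∑ j ∈ α, n j) = d i * b := by
  have hfin : ∀ x : ℕ, 0 < x →
      {a : ℕ | (∃ i, ∃ b ∈ A i, a = d i * b) ∧
               (∃ i, ∃ b ∈ A i, a + x = d i * b)}.Finite := by
    intro x hx
    obtain ⟨N, hN⟩ := Filter.eventually_atTop.mp (htend.eventually_gt_atTop x)
    set M : ℕ := (Finset.range N).sup (fun j => d j * ((A j).sup id)) with hM
    have hbound : ∀ j < N, ∀ c ∈ A j, d j * c ≤ M := by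
      intro j hj c hc
      calc d j * c ≤ d j * ((A j).sup id) :=
            Nat.mul_le_mul_left _ (Finset.le_sup (f := id) hc)
        _ ≤ M := by rw [hM]; exact Finset.le_sup (f := fun j => d j * ((A j).sup id)) (Finset.mem_range.mpr hj)
    apply (Set.finite_Iic M).subset
    rintro a ⟨⟨i, b, hb, ha⟩, ⟨j, c, hc, hac⟩⟩
    simp only [Set.mem_Iic]
    rcases le_total i j with hij | hji
    · -- d i divides x, so d i ≤ x, so i < N, so a ≤ M
      have h1 : d i ∣ a := ⟨b, ha⟩
      have h2 : d i ∣ a + x := (hdvd i j hij).trans ⟨c, hac⟩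
      have h3 : d i ∣ x := by
        have := Nat.dvd_sub h2 h1
        simpa using this
      have h4 : d i ≤ x := Nat.le_of_dvd hx h3
      have h5 : i < N := by
        by_contra h
        exact absurd (hN i (le_of_not_gt h)) (by omega)
      calc a = d i * b := ha
        _ ≤ M := hbound i h5 b hb
    · have h1 : d j ∣ a + x := ⟨c, hac⟩
      have h2 : d j ∣ a := (hdvd j i hji).trans ⟨b, ha⟩
      have h3 : d j ∣ x := by
        have := Nat.dvd_sub h1 h2
        simpa using this
      have h4 : d j ≤ x := Nat.le_of_dvd hx h3
      have h5 : j < N := by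
        by_contra h
        exact absurd (hN j (le_of_not_gt h)) (by omega)
      have : a + x ≤ M := hac ▸ hbound j h5 c hc
      omega
  refine ⟨hfin, ?_⟩
  rintro ⟨n, hn, hsum⟩
  set f : ℕ → ℕ := fun m => ∑ j ∈ Finset.Icc 1 (m + 1), n j with hf
  have hmono : StrictMono f := by
    apply strictMono_nat_of_lt_succ
    intro m
    have h1 : f (m + 1) = f m + n (m + 2) :=
      Finset.sum_Icc_succ_top (by omega) n
    have h2 := hn (m + 2)
    omega
  have hmem : ∀ m, f m ∈ {a : ℕ | (∃ i, ∃ b ∈ A i, a = d i * b) ∧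
               (∃ i, ∃ b ∈ A i, a + n 0 = d i * b)} := by
    intro m
    constructor
    · exact hsum _ ⟨1, by simp⟩
    · have h0 : (0 : ℕ) ∉ Finset.Icc 1 (m + 1) := by simp
      have := hsum (insert 0 (Finset.Icc 1 (m + 1))) ⟨0, Finset.mem_insert_self _ _⟩
      rwa [Finset.sum_insert h0, add_comm] at this
  exact Set.infinite_of_injective_forall_mem hmono.injective hmem (hfin (n 0) (hn 0))
end

section
/- Let A ⊆ ℕ be multiplicatively piecewise syndetic: there exist s_1, ..., s_k ∈ ℕ such that ⋃_{i=1}^k A/s_i is multiplicatively thick, where A/s = {n : ns ∈ A}. Then A is additively IP_0: for every r ∈ ℕ there exist positive integers n_1, ..., n_r such that every nonempty subset sum ∑_{i∈α} n_i lies in A. -/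
open Filter

private lemma fs_pos : ∀ {a : Stream' ℕ} {m : ℕ}, m ∈ Hindman.FS a →
    (∀ i, 0 < a.get i) → 0 < m := by
  intro a m hm
  induction hm with
  | head' a => intro h; exact h 0
  | tail' a m h ih => intro hp; exact ih fun i => hp (i + 1)
  | cons' a m h ih =>
      intro hp
      exact Nat.lt_of_lt_of_le (hp 0) (Nat.le_add_right _ _)

/-- From Hindman's theorem: any finite coloring of ℕ admits, for each `r`, positive
integers whose nonempty subset sums are monochromatic. -/
private lemma hindman_ip {κ : Type} [Finite κ] (C : ℕ → κ) (r : ℕ) :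
    ∃ m : Fin r → ℕ, (∀ i, 0 < m i) ∧
      ∃ c, ∀ α : Finset (Fin r), α.Nonempty → C (∑ i ∈ α, m i) = c := by
  classical
  set a0 : Stream' ℕ := fun n => 2 ^ n with ha0
  have ha0pos : ∀ i, 0 < a0.get i := fun i => Nat.pow_pos (by norm_num)
  set S : Set (Set ℕ) := Set.range (fun c : κ => {n : ℕ | 0 < n ∧ C n = c}) with hS
  have hSfin : S.Finite := Set.finite_range _
  have hScov : Hindman.FS a0 ⊆ ⋃₀ S := by
    intro m hm
    exact ⟨{n : ℕ | 0 < n ∧ C n = C m}, ⟨C m, rfl⟩, fs_pos hm ha0pos, rfl⟩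
  obtain ⟨cset, hcS, b, hb⟩ := Hindman.FS_partition_regular a0 S hSfin hScov
  obtain ⟨c, rfl⟩ := hcS
  refine ⟨fun i => b.get i, ?_, c, ?_⟩
  · intro i
    exact (hb (Hindman.FS.singleton b i)).1
  · intro α hα
    have hinj : Set.InjOn Fin.val (α : Set (Fin r)) := Fin.val_injective.injOn
    have hsum : (∑ i ∈ α, b.get i) = ∑ i ∈ α.image Fin.val, b.get i := by
      rw [Finset.sum_image (fun x _ y _ h => Fin.val_injective h)]
    have hne : (α.image Fin.val).Nonempty := hα.image _
    have := Hindman.FS.finset_sum b (α.image Fin.val) hne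
    rw [hsum]
    exact (hb this).2

/-- A finitary (Folkman-type) consequence, by compactness. -/
private lemma folkman {κ : Type} [Finite κ] (r : ℕ) :
    ∃ N : ℕ, ∀ C : ℕ → κ, ∃ m : Fin r → ℕ, (∀ i, 0 < m i) ∧
      ∃ c, ∀ α : Finset (Fin r), α.Nonempty →
        (∑ i ∈ α, m i) ≤ N ∧ C (∑ i ∈ α, m i) = c := by
  classical
  by_contra hcon
  push_neg at hcon
  choose C hC using hcon
  set U : Ultrafilter ℕ := Filter.hyperfilter ℕ with hU
  have hlim : ∀ n : ℕ, ∃ c : κ, ∀ᶠ N in (U : Filter ℕ), C N n = c := by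
    intro n
    obtain ⟨c, hc⟩ := (U.map (fun N => C N n)).eq_pure_of_finite
    refine ⟨c, ?_⟩
    have : {c} ∈ (U.map (fun N => C N n) : Filter κ) := by
      rw [hc]; exact Filter.singleton_mem_pure
    exact (by simpa [Filter.mem_map, Set.preimage, Set.mem_singleton_iff] using this : {x | C x n = c} ∈ U)
  choose D hD using hlim
  obtain ⟨m, hmpos, c, hmono⟩ := hindman_ip D r
  set N₀ : ℕ := ∑ i : Fin r, m i with hN₀
  have hsle : ∀ α : Finset (Fin r), (∑ i ∈ α, m i) ≤ N₀ :=
    fun α => Finset.sum_le_sum_of_subset (Finset.subset_univ α)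
  have hagree : ∀ᶠ N in (U : Filter ℕ), ∀ f ∈ Finset.range (N₀ + 1), C N f = D f := by
    rw [Filter.eventually_all_finset]
    intro f _
    exact hD f
  have hbig : ∀ᶠ N in (U : Filter ℕ), N₀ ≤ N := by
    refine Nat.hyperfilter_le_atTop ?_
    exact Filter.eventually_atTop.mpr ⟨N₀, fun n hn => hn⟩
  obtain ⟨N, hN1, hN2⟩ := (hagree.and hbig).exists
  obtain ⟨α, hα, hbad⟩ := hC N m hmpos c
  refine hbad (le_trans (hsle α) hN2) ?_
  rw [hN1 _ (Finset.mem_range.mpr (Nat.lt_succ_of_le (hsle α)))]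
  exact hmono α hα

/-- Multiplicatively piecewise syndetic subsets of ℕ are additively IP₀. -/
theorem mult_pws_add_ip_zero (A : Set ℕ)
    (hA : ∃ s : Finset ℕ, (∀ t ∈ s, 0 < t) ∧
      ∀ F : Finset ℕ, (∀ f ∈ F, 0 < f) →
        ∃ x : ℕ, 0 < x ∧ ∀ f ∈ F, ∃ t ∈ s, f * x * t ∈ A) :
    ∀ r : ℕ, ∃ n : Fin r → ℕ, (∀ i, 0 < n i) ∧
      ∀ α : Finset (Fin r), α.Nonempty → (∑ i ∈ α, n i) ∈ A := by
  classical
  obtain ⟨s, hspos, hthick⟩ := hA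
  intro r
  -- s is nonempty
  obtain ⟨x₁, hx₁, ht₁⟩ := hthick {1} (by simp)
  obtain ⟨t₀, ht₀, -⟩ := ht₁ 1 (Finset.mem_singleton_self 1)
  -- colors
  obtain ⟨N, hfolk⟩ := folkman (κ := {t // t ∈ s}) r
  set F : Finset ℕ := Finset.Icc 1 N with hF
  obtain ⟨x, hx, hxt⟩ := hthick F (fun f hf => (Finset.mem_Icc.mp hf).1)
  have Cdef : ∀ f : ℕ, ∃ t : {t // t ∈ s}, f ∈ F → f * x * (t : ℕ) ∈ A := by
    intro f
    by_cases hf : f ∈ F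
    · obtain ⟨t, hts, htA⟩ := hxt f hf
      exact ⟨⟨t, hts⟩, fun _ => htA⟩
    · exact ⟨⟨t₀, ht₀⟩, fun h => absurd h hf⟩
  choose C hCspec using Cdef
  obtain ⟨m, hmpos, ⟨t, hts⟩, hmono⟩ := hfolk C
  refine ⟨fun i => m i * (x * t), ?_, ?_⟩
  · intro i
    exact Nat.mul_pos (hmpos i) (Nat.mul_pos hx (hspos t hts))
  · intro α hα
    obtain ⟨hle, hcol⟩ := hmono α hα
    have hge : 1 ≤ ∑ i ∈ α, m i := by
      obtain ⟨i, hi⟩ := hα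
      exact le_trans (hmpos i) (Finset.single_le_sum (fun j _ => Nat.zero_le _) hi)
    have hmemF : (∑ i ∈ α, m i) ∈ F := Finset.mem_Icc.mpr ⟨hge, hle⟩
    have hA' := hCspec (∑ i ∈ α, m i) hmemF
    rw [hcol] at hA'
    have : (∑ i ∈ α, m i * (x * t)) = (∑ i ∈ α, m i) * x * t := by
      rw [← Finset.sum_mul, mul_assoc]
    rw [this]
    exact hA'
end

section
/- Let (S,+,·) be a commutative ring (or semiring) and let R ⊆ S be a multiplicative subsemigroup such that R is additively thick in (S,+). If A ⊆ R is multiplicatively syndetic in R (there exist r_1,...,r_k ∈ R with R = ⋃_i {x ∈ R : r_i·x ∈ A}), then A is additively piecewise syndetic in (S,+): there exist s_1, ..., s_m ∈ S such that ⋃_{j=1}^m (A − s_j) is additively thick in S, provided additionally that for each r ∈ R the principal ideal rS is additively piecewise syndetic in (S,+). -/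
open Finset

/-- Additive piecewise syndeticity as used in the main theorem. -/
def AuxPS {S : Type*} [CommSemiring S] (B : Set S) : Prop :=
  ∃ u : Finset S, ∀ F : Finset S, ∃ x : S, ∀ f ∈ F, ∃ s ∈ u, f + x + s ∈ B

lemma auxPS_mono {S : Type*} [CommSemiring S] {B C : Set S} (h : B ⊆ C) :
    AuxPS B → AuxPS C := by
  rintro ⟨u, hu⟩
  exact ⟨u, fun F => (hu F).imp fun x hx f hf =>
    (hx f hf).imp fun s hs => ⟨hs.1, h hs.2⟩⟩

/-- Piecewise syndeticity is partition regular (two cells). -/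
lemma auxPS_union {S : Type*} [CommSemiring S] {B C : Set S}
    (h : AuxPS (B ∪ C)) : AuxPS B ∨ AuxPS C := by
  classical
  by_cases hB : AuxPS B
  · exact Or.inl hB
  right
  obtain ⟨u, hu⟩ := h
  unfold AuxPS at hB
  push_neg at hB
  obtain ⟨F₀, hF₀⟩ := hB u
  refine ⟨Finset.image (fun p : S × S => p.1 + p.2) (F₀ ×ˢ u), fun F => ?_⟩
  obtain ⟨x, hx⟩ := hu (Finset.image (fun p : S × S => p.1 + p.2) (F ×ˢ F₀))
  refine ⟨x, fun f hf => ?_⟩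
  obtain ⟨g, hg, hgB⟩ := hF₀ (f + x)
  have hfg : f + g ∈ Finset.image (fun p : S × S => p.1 + p.2) (F ×ˢ F₀) :=
    Finset.mem_image.2 ⟨(f, g), Finset.mem_product.2 ⟨hf, hg⟩, rfl⟩
  obtain ⟨s, hs, hmem⟩ := hx (f + g) hfg
  have heq : f + g + x + s = g + (f + x) + s := by ring
  rw [heq] at hmem
  rcases hmem with hmem | hmem
  · exact absurd hmem (hgB s hs)
  · refine ⟨g + s, Finset.mem_image.2 ⟨(g, s), Finset.mem_product.2 ⟨hg, hs⟩, rfl⟩, ?_⟩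
    have : f + x + (g + s) = g + (f + x) + s := by ring
    rw [this]
    exact hmem

lemma auxPS_biUnion {S : Type*} [CommSemiring S] (B : S → Set S) :
    ∀ t : Finset S, AuxPS (⋃ r ∈ t, B r) → ∃ r ∈ t, AuxPS (B r) := by
  classical
  intro t
  induction t using Finset.induction with
  | empty =>
    rintro ⟨u, hu⟩
    obtain ⟨x, hx⟩ := hu {0}
    obtain ⟨s, _, hmem⟩ := hx 0 (Finset.mem_singleton_self 0)
    simp at hmem
  | @insert a t ha ih =>
    intro h
    rw [Finset.set_biUnion_insert] at h
    rcases auxPS_union h with h1 | h2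
    · exact ⟨a, Finset.mem_insert_self a t, h1⟩
    · obtain ⟨r, hr, hps⟩ := ih h2
      exact ⟨r, Finset.mem_insert_of_mem hr, hps⟩

/-- In a commutative semiring, if R is a multiplicative subsemigroup which is
additively thick, each principal ideal rS (r ∈ R) is additively piecewise
syndetic, and A ⊆ R is multiplicatively syndetic in R, then A is additively
piecewise syndetic in (S,+). -/
theorem mult_syndetic_add_piecewise_syndetic {S : Type*} [CommSemiring S]
    (R : Set S) (hRmul : ∀ a ∈ R, ∀ b ∈ R, a * b ∈ R)
    (hRthick : ∀ F : Finset S, ∃ x : S, ∀ f ∈ F, f + x ∈ R)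
    (hideal : ∀ r ∈ R, ∃ u : Finset S, ∀ F : Finset S, ∃ x : S,
      ∀ f ∈ F, ∃ s ∈ u, ∃ y : S, f + x + s = r * y)
    (A : Set S) (hAR : A ⊆ R)
    (hAsynd : ∃ t : Finset S, (↑t : Set S) ⊆ R ∧ ∀ x ∈ R, ∃ r ∈ t, r * x ∈ A) :
    ∃ u : Finset S, ∀ F : Finset S, ∃ x : S, ∀ f ∈ F, ∃ s ∈ u, f + x + s ∈ A := by
  classical
  obtain ⟨t, htR, hcov⟩ := hAsynd
  -- R is piecewise syndetic (being thick)
  have hPSR : AuxPS R := by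
    refine ⟨{0}, fun F => (hRthick F).imp fun x hx f hf =>
      ⟨0, Finset.mem_singleton_self 0, ?_⟩⟩
    rw [add_zero]; exact hx f hf
  -- R is covered by the cells B r = {x ∈ R | r * x ∈ A}
  have hsub : R ⊆ ⋃ r ∈ t, {x : S | x ∈ R ∧ r * x ∈ A} := by
    intro x hx
    obtain ⟨r, hr, hra⟩ := hcov x hx
    exact Set.mem_biUnion hr ⟨hx, hra⟩
  obtain ⟨r, hrt, hPSB⟩ := auxPS_biUnion _ t (auxPS_mono hsub hPSR)
  have hrR : R ⊆ R := le_refl _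
  obtain ⟨ur, hur⟩ := hideal r (htR hrt)
  obtain ⟨uB, huB⟩ := hPSB
  refine ⟨Finset.image (fun p : S × S => p.1 + r * p.2) (ur ×ˢ uB), fun F => ?_⟩
  obtain ⟨x₁, hx₁⟩ := hur F
  choose s₁ hs₁ y hy using hx₁
  have hYdef := huB (F.attach.image (fun f : {x // x ∈ F} => y f.1 f.2))
  obtain ⟨z, hz⟩ := hYdef
  refine ⟨x₁ + r * z, fun f hf => ?_⟩
  have hyY : y f hf ∈ F.attach.image (fun f : {x // x ∈ F} => y f.1 f.2) :=
    Finset.mem_image.2 ⟨⟨f, hf⟩, Finset.mem_attach _ _, rfl⟩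
  obtain ⟨s₂, hs₂, hmem⟩ := hz _ hyY
  refine ⟨s₁ f hf + r * s₂,
    Finset.mem_image.2 ⟨(s₁ f hf, s₂), Finset.mem_product.2 ⟨hs₁ f hf, hs₂⟩, rfl⟩, ?_⟩
  have heq : f + (x₁ + r * z) + (s₁ f hf + r * s₂) = r * (y f hf + z + s₂) := by
    rw [mul_add, mul_add, ← hy f hf]; ring
  rw [heq]
  exact hmem.2
end
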